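/- arXiv:math/9806098 — 5 statements merged into one kernel-verified Lean document; each statement's English description precedes it below -/
import Mathlib

section
/- For every real number γ > 0 there exist real numbers ε > 0 and η > 0 such that for every b ∈ [−ε, (1−ε)/2], writing L_b for the line {(t, γ(t−b)) : t ∈ ℝ}, the one-dimensional Lebesgue measure of {t ∈ ℝ : (t, γ(t−b)) ∈ E₁} is at least η times the one-dimensional Lebesgue measure of {t ∈ ℝ : (t, γ(t−b)) ∈ E}. -/
open MeasureTheory

/-- The open triangle with given vertices: the interior of their convex hull. -/
def triInterior (a b c : ℝ × ℝ) : Set (ℝ × ℝ) :=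
  interior (convexHull ℝ {a, b, c})

/-- The closed triangle `E` with vertices `(0,0)`, `(1,0)`, `(0,1)`. -/
def E : Set (ℝ × ℝ) := {p : ℝ × ℝ | 0 ≤ p.1 ∧ 0 ≤ p.2 ∧ p.1 + p.2 ≤ 1}

/-- `E₁`: the interior of the triangle with vertices `(0,1/2)`, `(1/2,0)`, `(1/2,1/2)`. -/
def E1 : Set (ℝ × ℝ) := triInterior (0, 1 / 2) (1 / 2, 0) (1 / 2, 1 / 2)

/-!
The slice of `E` by any line `L_b` lies over `t ∈ [0, 1]`, so it has measure at most `1`.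
`E₁` is cut out by `x < 1/2`, `y < 1/2`, `x + y > 1/2`, so its slice is the interval
`((1/2 + γ b)/(1 + γ), min (1/2) (b + 1/(2γ)))`, of length
`min (γ (1/2 - b)) (b + 1/(2γ)) / (1 + γ)`. For `ε = 1/(4γ)` and `b ∈ [-ε, (1-ε)/2]` this is at
least `η = min (1/8) (1/(4γ)) / (1 + γ)`.
-/

open Set

lemma add_add_smul_mem_convexHull_triple {R V : Type*} [Field R] [LinearOrder R]
    [IsStrictOrderedRing R] [AddCommGroup V] [Module R V] {a b c : V} {u v w : R}
    (hu : 0 ≤ u) (hv : 0 ≤ v) (hw : 0 ≤ w) (huvw : u + v + w = 1) :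
    u • a + v • b + w • c ∈ convexHull R {a, b, c} := by
  have := (convex_convexHull R {a, b, c}).sum_mem (t := Finset.univ) (w := ![u, v, w])
    (z := ![a, b, c]) (by simp [Fin.forall_fin_succ, hu, hv, hw])
    (by simp [Fin.sum_univ_three, huvw])
    (fun i _ => subset_convexHull R _ (by fin_cases i <;> simp))
  simpa [Fin.sum_univ_three] using this

lemma mem_E1 {x y : ℝ} (hx : x < 1 / 2) (hy : y < 1 / 2) (hxy : 1 / 2 < x + y) :
    (x, y) ∈ E1 := by
  set U : Set (ℝ × ℝ) := {p | p.1 < 1 / 2 ∧ p.2 < 1 / 2 ∧ 1 / 2 < p.1 + p.2}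
  have hU : IsOpen U :=
    (isOpen_lt continuous_fst continuous_const).inter
      ((isOpen_lt continuous_snd continuous_const).inter
        (isOpen_lt continuous_const (continuous_fst.add continuous_snd)))
  refine interior_maximal (fun p (hp : p ∈ U) => ?_) hU ⟨hx, hy, hxy⟩
  obtain ⟨hp₁, hp₂, hp₁₂⟩ := hp
  -- barycentric coordinates of `p` with respect to the three vertices
  convert add_add_smul_mem_convexHull_triple (R := ℝ) (a := ((0 : ℝ), (1 / 2 : ℝ)))
    (b := ((1 / 2 : ℝ), (0 : ℝ))) (c := ((1 / 2 : ℝ), (1 / 2 : ℝ)))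
    (u := 1 - 2 * p.1) (v := 1 - 2 * p.2) (w := 2 * p.1 + 2 * p.2 - 1)
    (by linarith) (by linarith) (by linarith) (by ring) using 1
  ext <;> simp <;> ring

lemma slice_E_subset_Icc (γ b : ℝ) : {t : ℝ | (t, γ * (t - b)) ∈ E} ⊆ Icc 0 1 :=
  fun _ ⟨h₁, _, h₁₂⟩ => ⟨h₁, by linarith⟩

lemma Ioo_subset_slice_E1 {γ : ℝ} (hγ : 0 < γ) (b : ℝ) :
    Ioo ((1 / 2 + γ * b) / (1 + γ)) (min (1 / 2) (b + 1 / (2 * γ))) ⊆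
      {t : ℝ | (t, γ * (t - b)) ∈ E1} := by
  rintro t ⟨hl, hr⟩
  rw [lt_min_iff] at hr
  rw [div_lt_iff₀ (by linarith)] at hl
  refine mem_E1 hr.1 ?_ (by linarith)
  calc γ * (t - b) < γ * (1 / (2 * γ)) := by gcongr; linarith
    _ = 1 / 2 := by field_simp

lemma le_slice_E1_length {γ b : ℝ} (hγ : 0 < γ)
    (hb : b ∈ Icc (-(1 / (4 * γ))) ((1 - 1 / (4 * γ)) / 2)) :
    min (1 / 8) (1 / (4 * γ)) / (1 + γ) ≤
      min (1 / 2) (b + 1 / (2 * γ)) - (1 / 2 + γ * b) / (1 + γ) := by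
  obtain ⟨hb₁, hb₂⟩ := hb
  have hγb : γ * b ≤ γ / 2 - 1 / 8 := by
    calc γ * b ≤ γ * ((1 - 1 / (4 * γ)) / 2) := by gcongr
      _ = γ / 2 - 1 / 8 := by field_simp; ring
  have h2γ : 1 / (2 * γ) = 2 * (1 / (4 * γ)) := by field_simp; ring
  have hγ2 : 1 / (2 * γ) * γ = 1 / 2 := by field_simp
  rw [le_sub_iff_add_le, ← add_div, div_le_iff₀ (by linarith),
    min_mul_of_nonneg _ _ (by linarith : (0 : ℝ) ≤ 1 + γ), le_min_iff]
  constructor <;> linarith [min_le_left (1 / 8 : ℝ) (1 / (4 * γ)),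
    min_le_right (1 / 8 : ℝ) (1 / (4 * γ))]

theorem stmt0 (γ : ℝ) (hγ : 0 < γ) :
    ∃ ε > (0 : ℝ), ∃ η > (0 : ℝ), ∀ b ∈ Set.Icc (-ε) ((1 - ε) / 2),
      ENNReal.ofReal η * volume {t : ℝ | (t, γ * (t - b)) ∈ E} ≤
        volume {t : ℝ | (t, γ * (t - b)) ∈ E1} := by
  set η := min (1 / 8) (1 / (4 * γ)) / (1 + γ)
  refine ⟨1 / (4 * γ), by positivity, η, by positivity, fun b hb => ?_⟩
  set l := (1 / 2 + γ * b) / (1 + γ)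
  set r := min (1 / 2) (b + 1 / (2 * γ))
  calc ENNReal.ofReal η * volume {t : ℝ | (t, γ * (t - b)) ∈ E}
      ≤ ENNReal.ofReal η * volume (Icc (0 : ℝ) 1) := by gcongr; exact slice_E_subset_Icc γ b
    _ = ENNReal.ofReal η := by simp
    _ ≤ ENNReal.ofReal (r - l) := ENNReal.ofReal_le_ofReal (le_slice_E1_length hγ hb)
    _ = volume (Ioo l r) := Real.volume_Ioo.symm
    _ ≤ volume {t : ℝ | (t, γ * (t - b)) ∈ E1} := measure_mono (Ioo_subset_slice_E1 hγ b)
end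

section
/- Let q be a prime and n ≥ 1 a natural number. Then for every k with 0 ≤ k ≤ qⁿ − 2, the binomial coefficient satisfies C(qⁿ − 2, k) ≡ (−1)^k · (k + 1) (mod q). -/
lemma aux_pow_sub_one (q : ℕ) (hq : q.Prime) (n : ℕ) (hn : 1 ≤ n) :
    ∀ j, j ≤ q ^ n - 1 → ((Nat.choose (q ^ n - 1) j : ℕ) : ZMod q) = (-1) ^ j := by
  have h2 : 2 ≤ q ^ n := by
    calc 2 ≤ q := hq.two_le
    _ = q ^ 1 := (pow_one q).symm
    _ ≤ q ^ n := Nat.pow_le_pow_right hq.pos hn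
  intro j
  induction j with
  | zero => simp
  | succ j ih =>
    intro hj
    have hj' : j ≤ q ^ n - 1 := by omega
    have hpasc : (q ^ n).choose (j + 1) = (q ^ n - 1).choose j + (q ^ n - 1).choose (j + 1) := by
      have : q ^ n - 1 + 1 = q ^ n := by omega
      rw [← this, Nat.choose_succ_succ]; simp
    have hdvd : (q : ℕ) ∣ (q ^ n).choose (j + 1) :=
      hq.dvd_choose_pow (by omega) (by omega)
    have h0 : (((q ^ n).choose (j + 1) : ℕ) : ZMod q) = 0 := by
      exact_mod_cast (ZMod.natCast_eq_zero_iff _ _).mpr hdvd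
    have := h0
    rw [hpasc] at this
    push_cast at this
    rw [ih hj'] at this
    have : ((Nat.choose (q ^ n - 1) (j + 1) : ℕ) : ZMod q) = -(-1) ^ j := by
      linear_combination this
    rw [this]; ring

theorem stmt8 (q : ℕ) (hq : q.Prime) (n : ℕ) (hn : 1 ≤ n) (k : ℕ) (hk : k ≤ q ^ n - 2) :
    ((Nat.choose (q ^ n - 2) k : ℕ) : ZMod q) = (-1) ^ k * ((k : ZMod q) + 1) := by
  have h2 : 2 ≤ q ^ n := by
    calc 2 ≤ q := hq.two_le
    _ = q ^ 1 := (pow_one q).symm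
    _ ≤ q ^ n := Nat.pow_le_pow_right hq.pos hn
  induction k with
  | zero => simp
  | succ k ih =>
    have hk' : k ≤ q ^ n - 2 := by omega
    have hpasc : (q ^ n - 1).choose (k + 1) = (q ^ n - 2).choose k + (q ^ n - 2).choose (k + 1) := by
      have : q ^ n - 2 + 1 = q ^ n - 1 := by omega
      rw [← this, Nat.choose_succ_succ]
    have h1 : ((Nat.choose (q ^ n - 1) (k + 1) : ℕ) : ZMod q) = (-1) ^ (k + 1) :=
      aux_pow_sub_one q hq n hn (k + 1) (by omega)
    rw [hpasc] at h1
    push_cast at h1 ⊢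
    rw [ih hk'] at h1
    linear_combination h1 - ((k : ZMod q) + 2) * pow_succ (-1 : ZMod q) k
end

section
/- Let q be a prime and 0 ≤ p ≤ q − 1. For each n ≥ 1 let fₙ be a unimodal probability distribution on {0, …, qⁿ − 2}: fₙ(m) ≥ 0 for all m, Σ_{m=0}^{qⁿ−2} fₙ(m) = 1, and there exists cₙ ∈ {0, …, qⁿ − 2} such that fₙ is nondecreasing on {0, …, cₙ} and nonincreasing on {cₙ, …, qⁿ − 2}. Let M_p(n) = {m : 0 ≤ m ≤ qⁿ − 2 and C(qⁿ − 2, m) ≡ p (mod q)}. If max{fₙ(m) : 0 ≤ m ≤ qⁿ − 2} → 0 as n → ∞, then Σ_{m ∈ M_p(n)} fₙ(m) → 1/q as n → ∞. -/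
/-!
Modulo q, C(qⁿ, m) vanishes for 0 < m < qⁿ, so Pascal's rule gives C(qⁿ - 1, m) ≡ (-1)ᵐ and then
C(qⁿ - 2, m) ≡ (-1)ᵐ (m + 1). This residue is 2q-periodic in m and hits every class exactly twice
per period, so the weights w(m) = [residue = p] - 1/q have bounded partial sums. Abel summation
against a unimodal f, whose total variation is at most twice its maximum, then bounds
|Σ_{M_p(n)} fₙ - 1/q| by a constant times max fₙ.
-/

open Filter Finset

namespace Nat

variable {R : Type*} [CommRing R]

theorem cast_choose_eq_neg_one_pow {N : ℕ}
    (h : ∀ m, 0 < m → m ≤ N → ((N + 1).choose m : R) = 0) :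
    ∀ m ≤ N, (N.choose m : R) = (-1) ^ m := by
  intro m
  induction m with
  | zero => simp
  | succ m ih =>
    intro hm
    have hpascal := congrArg (Nat.cast : ℕ → R) (Nat.choose_succ_succ' N m)
    rw [h (m + 1) m.succ_pos hm, Nat.cast_add, ih (by omega)] at hpascal
    rw [pow_succ]
    linear_combination -hpascal

theorem cast_choose_eq_neg_one_pow_mul {N : ℕ}
    (h : ∀ m ≤ N + 1, ((N + 1).choose m : R) = (-1) ^ m) :
    ∀ m ≤ N, (N.choose m : R) = (-1) ^ m * (m + 1) := by
  intro m
  induction m with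
  | zero => simp
  | succ m ih =>
    intro hm
    have hpascal := congrArg (Nat.cast : ℕ → R) (Nat.choose_succ_succ' N m)
    rw [h (m + 1) (by omega), Nat.cast_add, ih (by omega)] at hpascal
    push_cast
    linear_combination -hpascal + (m + 2 : R) * pow_succ (-1 : R) m

theorem Prime.cast_choose_pow_sub_two {q n : ℕ} (hq : q.Prime) (hn : 0 < n) :
    ∀ m ≤ q ^ n - 2, ((q ^ n - 2).choose m : ZMod q) = (-1) ^ m * (m + 1) := by
  obtain ⟨N, hN⟩ : ∃ N, q ^ n = N + 2 :=
    ⟨q ^ n - 2, by have := Nat.le_self_pow hn.ne' q; have := hq.two_le; omega⟩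
  rw [hN, Nat.add_sub_cancel]
  refine cast_choose_eq_neg_one_pow_mul (cast_choose_eq_neg_one_pow fun m hm hmN => ?_)
  rw [show N + 1 + 1 = q ^ n by omega, ZMod.natCast_eq_zero_iff]
  exact hq.dvd_choose_pow hm.ne' (by omega)

end Nat

theorem abs_sum_range_le_of_periodic {w : ℕ → ℝ} {P : ℕ} (hP : 0 < P)
    (hw : Function.Periodic w P) (hzero : ∑ m ∈ range P, w m = 0) (n : ℕ) :
    |∑ m ∈ range n, w m| ≤ ∑ m ∈ range P, |w m| := by
  have hper : Function.Periodic (fun n => ∑ m ∈ range n, w m) P := by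
    intro n
    induction n with
    | zero => simpa using hzero
    | succ n ih =>
      simp only [Nat.succ_add, sum_range_succ, ← ih, hw n]
  rw [← hper.map_mod_nat n]
  calc |∑ m ∈ range (n % P), w m| ≤ ∑ m ∈ range (n % P), |w m| := abs_sum_le_sum_abs _ _
    _ ≤ ∑ m ∈ range P, |w m| :=
      sum_le_sum_of_subset_of_nonneg (range_subset_range.2 (Nat.mod_lt n hP).le)
        fun _ _ _ => abs_nonneg _

theorem sum_range_two_mul {M : Type*} [AddCommMonoid M] (h : ℕ → M) (k : ℕ) :
    ∑ m ∈ range (2 * k), h m = ∑ i ∈ range k, (h (2 * i) + h (2 * i + 1)) := by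
  induction k with
  | zero => simp
  | succ k ih => rw [Nat.mul_succ, sum_range_succ, sum_range_succ, sum_range_succ, ih, add_assoc]

theorem ZMod.card_filter_range_natCast_eq {q : ℕ} [NeZero q] (x : ZMod q) :
    #((range q).filter fun k : ℕ => (k : ZMod q) = x) = 1 := by
  rw [card_eq_one]
  refine ⟨x.val, ext fun k => ?_⟩
  simp only [mem_filter, mem_range, mem_singleton]
  constructor
  · rintro ⟨hk, rfl⟩
    exact (ZMod.val_natCast_of_lt hk).symm
  · rintro rfl
    exact ⟨ZMod.val_lt x, ZMod.natCast_zmod_val x⟩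

theorem ZMod.periodic_neg_one_pow_mul_add_one (q : ℕ) :
    Function.Periodic (fun m : ℕ => (-1 : ZMod q) ^ m * (m + 1)) (2 * q) := by
  intro m
  simp [pow_add, pow_mul]

theorem ZMod.card_filter_neg_one_pow_mul_add_one_eq {q : ℕ} (hq : q.Prime) (p : ZMod q) :
    #((range (2 * q)).filter fun m : ℕ => (-1 : ZMod q) ^ m * (m + 1) = p) = 2 := by
  obtain rfl | hq2 := eq_or_ne q 2
  · revert p; decide
  have := Fact.mk hq
  have htwo : (2 : ZMod q) ≠ 0 := by
    intro h
    rw [show (2 : ZMod q) = ((2 : ℕ) : ZMod q) by norm_num, ZMod.natCast_eq_zero_iff] at h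
    exact hq2 ((Nat.prime_dvd_prime_iff_eq hq Nat.prime_two).1 h)
  have heven (k : ℕ) : (-1 : ZMod q) ^ (2 * k) * ((2 * k : ℕ) + 1) = p ↔
      (k : ZMod q) = (p - 1) / 2 := by
    rw [eq_div_iff htwo, pow_mul, neg_one_sq, one_pow, one_mul]
    push_cast
    constructor <;> intro h <;> linear_combination h
  have hodd (k : ℕ) : (-1 : ZMod q) ^ (2 * k + 1) * ((2 * k + 1 : ℕ) + 1) = p ↔
      (k : ZMod q) = (-p - 2) / 2 := by
    rw [eq_div_iff htwo, pow_succ, pow_mul, neg_one_sq, one_pow, one_mul]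
    push_cast
    constructor <;> intro h <;> linear_combination -h
  rw [card_filter, sum_range_two_mul]
  simp only [heven, hodd, sum_add_distrib, ← card_filter, ZMod.card_filter_range_natCast_eq]

theorem sum_range_abs_sub_of_unimodal {g : ℕ → ℝ} {c N : ℕ} (hc : c ≤ N)
    (hmono : MonotoneOn g (Set.Iic c)) (hanti : AntitoneOn g (Set.Icc c N)) :
    ∑ j ∈ range N, |g (j + 1) - g j| = 2 * g c - g 0 - g N := by
  have hup : ∀ j ∈ range c, |g (j + 1) - g j| = g (j + 1) - g j := fun j hj => by
    have hj := mem_range.1 hj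
    exact abs_of_nonneg (sub_nonneg.2 (hmono (Set.mem_Iic.2 hj.le) (Set.mem_Iic.2 hj) j.le_succ))
  have hdown : ∀ j ∈ Ico c N, |g (j + 1) - g j| = -(g (j + 1) - g j) := fun j hj => by
    obtain ⟨hcj, hjN⟩ := mem_Ico.1 hj
    exact abs_of_nonpos (sub_nonpos.2 (hanti ⟨hcj, hjN.le⟩ ⟨hcj.trans j.le_succ, hjN⟩ j.le_succ))
  rw [← sum_range_add_sum_Ico _ hc, sum_congr rfl hup, sum_congr rfl hdown, sum_neg_distrib,
    sum_range_sub, sum_Ico_sub _ hc]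
  ring

theorem abs_sum_range_mul_le {w g : ℕ → ℝ} {B : ℝ} (hw : ∀ n, |∑ m ∈ range n, w m| ≤ B)
    (N : ℕ) :
    |∑ m ∈ range (N + 1), g m * w m| ≤ B * (|g N| + ∑ j ∈ range N, |g (j + 1) - g j|) := by
  have := sum_range_by_parts g w (N + 1)
  simp only [smul_eq_mul, Nat.add_sub_cancel] at this
  rw [this]
  calc |g N * ∑ m ∈ range (N + 1), w m
        - ∑ j ∈ range N, (g (j + 1) - g j) * ∑ m ∈ range (j + 1), w m|
      ≤ |g N| * B + ∑ j ∈ range N, |g (j + 1) - g j| * B := by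
        refine (abs_sub _ _).trans (add_le_add ?_ ((abs_sum_le_sum_abs _ _).trans
          (sum_le_sum fun j _ => ?_)))
        all_goals rw [abs_mul]; exact mul_le_mul_of_nonneg_left (hw _) (abs_nonneg _)
    _ = B * (|g N| + ∑ j ∈ range N, |g (j + 1) - g j|) := by rw [← sum_mul]; ring

theorem abs_sum_range_mul_le_of_unimodal {w g : ℕ → ℝ} {B : ℝ}
    (hw : ∀ n, |∑ m ∈ range n, w m| ≤ B) {c N : ℕ} (hc : c ≤ N)
    (hmono : MonotoneOn g (Set.Iic c)) (hanti : AntitoneOn g (Set.Icc c N))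
    (h0 : 0 ≤ g 0) (hN : 0 ≤ g N) :
    |∑ m ∈ range (N + 1), g m * w m| ≤ 2 * B * g c := by
  have hB : 0 ≤ B := (abs_nonneg _).trans (hw 0)
  calc |∑ m ∈ range (N + 1), g m * w m|
      ≤ B * (|g N| + ∑ j ∈ range N, |g (j + 1) - g j|) := abs_sum_range_mul_le hw N
    _ = B * (2 * g c - g 0) := by
      rw [sum_range_abs_sub_of_unimodal hc hmono hanti, abs_of_nonneg hN]; ring
    _ ≤ 2 * B * g c := by nlinarith

theorem abs_sum_range_indicator_sub_le {q : ℕ} (hq : q.Prime) (p : ZMod q) (n : ℕ) :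
    |∑ m ∈ range n,
      ((if (-1 : ZMod q) ^ m * (m + 1) = p then 1 else 0) - 1 / (q : ℝ))| ≤ 2 * q := by
  have hq1 : 1 ≤ (q : ℝ) := by exact_mod_cast hq.one_lt.le
  refine (abs_sum_range_le_of_periodic (Nat.mul_pos two_pos hq.pos) (fun m => ?_) ?_ n).trans ?_
  · exact congrArg (fun x => (if x = p then 1 else 0) - 1 / (q : ℝ))
      (ZMod.periodic_neg_one_pow_mul_add_one q m)
  · rw [sum_sub_distrib, sum_boole, ZMod.card_filter_neg_one_pow_mul_add_one_eq hq, sum_const,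
      card_range, nsmul_eq_mul]
    field_simp
    norm_num
  · have hw (m : ℕ) : |(if (-1 : ZMod q) ^ m * (m + 1) = p then 1 else 0) - 1 / (q : ℝ)| ≤ 1 := by
      have : 1 / (q : ℝ) ≤ 1 := (div_le_one (by positivity)).2 hq1
      rw [abs_le]
      constructor <;> split_ifs <;> linarith [one_div_pos.2 (zero_lt_one.trans_le hq1)]
    simpa using sum_le_card_nsmul (range (2 * q)) _ 1 fun m _ => hw m

theorem abs_sum_filter_choose_sub_le {q : ℕ} (hq : q.Prime) (p : ZMod q) {n : ℕ} (hn : 0 < n)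
    {f : ℕ → ℝ} (hf0 : ∀ m, 0 ≤ f m) (hsum : ∑ m ∈ range (q ^ n - 1), f m = 1)
    {c : ℕ} (hc : c ≤ q ^ n - 2) (hmono : MonotoneOn f (Set.Iic c))
    (hanti : AntitoneOn f (Set.Icc c (q ^ n - 2))) :
    |∑ m ∈ (range (q ^ n - 1)).filter (fun m => ((q ^ n - 2).choose m : ZMod q) = p), f m
      - 1 / q| ≤ 2 * (2 * q) * f c := by
  have hN : q ^ n - 1 = q ^ n - 2 + 1 := by
    have := Nat.le_self_pow hn.ne' q; have := hq.two_le; omega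
  have hfilter : (range (q ^ n - 1)).filter (fun m => ((q ^ n - 2).choose m : ZMod q) = p)
      = (range (q ^ n - 1)).filter (fun m : ℕ => (-1 : ZMod q) ^ m * (m + 1) = p) :=
    filter_congr fun m hm => by
      rw [Nat.Prime.cast_choose_pow_sub_two hq hn m (by rw [mem_range] at hm; omega)]
  have hweight : ∑ m ∈ (range (q ^ n - 1)).filter (fun m : ℕ => (-1 : ZMod q) ^ m * (m + 1) = p),
      f m - 1 / q = ∑ m ∈ range (q ^ n - 1),
        f m * ((if (-1 : ZMod q) ^ m * (m + 1) = p then 1 else 0) - 1 / (q : ℝ)) := by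
    simp only [mul_sub, mul_ite, mul_one, mul_zero, sum_sub_distrib, ← sum_filter, ← sum_mul,
      hsum, one_mul]
  rw [hfilter, hweight, hN]
  exact abs_sum_range_mul_le_of_unimodal (abs_sum_range_indicator_sub_le hq p) hc hmono hanti
    (hf0 0) (hf0 _)

theorem stmt10_general (q : ℕ) (hq : q.Prime) (p : ℕ)
    (f : ℕ → ℕ → ℝ)
    (hnonneg : ∀ n, 1 ≤ n → ∀ m, 0 ≤ f n m)
    (hsum : ∀ n, 1 ≤ n → ∑ m ∈ Finset.range (q ^ n - 1), f n m = 1)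
    (hunimodal : ∀ n, 1 ≤ n → ∃ c, c ≤ q ^ n - 2 ∧
      (∀ a b, a ≤ b → b ≤ c → f n a ≤ f n b) ∧
      (∀ a b, c ≤ a → a ≤ b → b ≤ q ^ n - 2 → f n b ≤ f n a))
    (hmax : ∀ ε : ℝ, 0 < ε → ∃ N, ∀ n, N ≤ n → ∀ m, m ≤ q ^ n - 2 → f n m < ε) :
    Tendsto
      (fun n : ℕ => ∑ m ∈ (Finset.range (q ^ n - 1)).filter
          (fun m => ((Nat.choose (q ^ n - 2) m : ℕ) : ZMod q) = (p : ZMod q)), f n m)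
      atTop (nhds (1 / (q : ℝ))) := by
  have hq0 : (0 : ℝ) < q := by exact_mod_cast hq.pos
  rw [Metric.tendsto_atTop]
  intro δ hδ
  obtain ⟨N, hN⟩ := hmax (δ / (2 * (2 * q))) (by positivity)
  refine ⟨max N 1, fun n hn => ?_⟩
  have hn1 : 1 ≤ n := le_of_max_le_right hn
  obtain ⟨c, hc, hinc, hdec⟩ := hunimodal n hn1
  have hbound := abs_sum_filter_choose_sub_le hq p hn1 (hnonneg n hn1) (hsum n hn1) hc
    (fun a _ b hb hab => hinc a b hab hb) (fun a ha b hb hab => hdec a b ha.1 hab hb.2)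
  calc dist _ _ ≤ 2 * (2 * q) * f n c := hbound
    _ < 2 * (2 * q) * (δ / (2 * (2 * q))) := by
      gcongr; exact hN n (le_of_max_le_left hn) c hc
    _ = δ := by field_simp

theorem stmt10 (q : ℕ) (hq : q.Prime) (p : ℕ) (hp : p ≤ q - 1)
    (f : ℕ → ℕ → ℝ)
    (hnonneg : ∀ n, 1 ≤ n → ∀ m, 0 ≤ f n m)
    (hsum : ∀ n, 1 ≤ n → ∑ m ∈ Finset.range (q ^ n - 1), f n m = 1)
    (hunimodal : ∀ n, 1 ≤ n → ∃ c, c ≤ q ^ n - 2 ∧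
      (∀ a b, a ≤ b → b ≤ c → f n a ≤ f n b) ∧
      (∀ a b, c ≤ a → a ≤ b → b ≤ q ^ n - 2 → f n b ≤ f n a))
    (hmax : ∀ ε : ℝ, 0 < ε → ∃ N, ∀ n, N ≤ n → ∀ m, m ≤ q ^ n - 2 → f n m < ε) :
    Tendsto
      (fun n : ℕ => ∑ m ∈ (Finset.range (q ^ n - 1)).filter
          (fun m => ((Nat.choose (q ^ n - 2) m : ℕ) : ZMod q) = (p : ZMod q)), f n m)
      atTop (nhds (1 / (q : ℝ))) :=
  stmt10_general q hq p f hnonneg hsum hunimodal hmax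
end

section
/- Let q be a prime, 0 < α < 1, and for natural numbers n ≥ 1 and 0 ≤ p ≤ q − 1 let Fₙ(q,p) = {x ∈ {0,1}^ℕ : d_{qⁿ−2}(x) ≡ p (mod q)}. Then for every fixed m ≥ 1 and all p, r ∈ {0, …, q − 1}, lim_{n→∞} μ_α(Fₙ(q,p) ∩ F_m(q,r)) = (1/q) · μ_α(F_m(q,r)). -/
open MeasureTheory Filter

/-- `kₙ(x)`: the number of `1`s among the first `n` coordinates of the path `x`. -/
def kpath (x : ℕ → Bool) (n : ℕ) : ℕ :=
  ((Finset.range n).filter (fun i => x i = true)).card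

/-- `dₙ(x) = C(n, kₙ(x))`: the binomial coefficient at the `n`-th vertex of the
path in Pascal's triangle determined by `x`. -/
def dpath (n : ℕ) (x : ℕ → Bool) : ℕ := n.choose (kpath x n)

/-- `μ` is the Bernoulli product measure `μ_α` on `{0,1}^ℕ`: it is a probability
measure under which the coordinates are i.i.d. with probability `α` of being `1`. -/
def IsBernoulli (α : ℝ) (μ : Measure (ℕ → Bool)) : Prop :=
  IsProbabilityMeasure μ ∧
    ∀ (s : Finset ℕ) (y : ℕ → Bool),
      μ {x : ℕ → Bool | ∀ i ∈ s, x i = y i} =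
        ∏ i ∈ s, (if y i = true then ENNReal.ofReal α else ENNReal.ofReal (1 - α))

/-- `Fₙ(q,p)`: the set of paths whose binomial coefficient at level `qⁿ − 2`
is congruent to `p` modulo `q`. -/
def F (q n p : ℕ) : Set (ℕ → Bool) :=
  {x : ℕ → Bool | ((dpath (q ^ n - 2) x : ℕ) : ZMod q) = (p : ZMod q)}

/-!
Pascal's rule and `q ∣ C(qⁿ, k)` for `0 < k < qⁿ` give, by induction on `k < qⁿ`,
`C(qⁿ - 1, k) ≡ (-1)ᵏ` and then `C(qⁿ - 2, k) ≡ (-1)ᵏ (k + 1) (mod q)`. So for `n ≥ 1`,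
membership in `Fₙ(q,p)` depends only on `k_{qⁿ-2}(x)` modulo `2q`, and exactly two residues
modulo `2q` give `p`.

The event `F_m(q,r)` depends only on the first `q^m - 2` coordinates. Restricted to it, the law
of `k_N` modulo `L` evolves as a lazy random walk on `ZMod L`, whose Fourier coefficients get
multiplied by `1 - α + α ζ` (`ζ` an `L`-th root of unity) at every step. These factors have
modulus `< 1` for `ζ ≠ 1`, so `k_N` equidistributes modulo `L` independently of `F_m(q,r)`, and
`μ(Fₙ ∩ F_m) → (2 / 2q) μ(F_m)`.
-/

open Finset

section Binomial

variable {q : ℕ}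

theorem choose_prime_pow_sub_one_cast (hq : q.Prime) {n k : ℕ} (hk : k < q ^ n) :
    ((q ^ n - 1).choose k : ZMod q) = (-1) ^ k := by
  induction k with
  | zero => simp
  | succ k ih =>
    have hpos : 0 < q ^ n := by omega
    have hpascal := Nat.choose_succ_succ' (q ^ n - 1) k
    rw [Nat.sub_add_cancel hpos] at hpascal
    have hdvd : (((q ^ n).choose (k + 1) : ℕ) : ZMod q) = 0 :=
      (ZMod.natCast_eq_zero_iff _ _).2 (hq.dvd_choose_pow k.succ_ne_zero hk.ne)
    rw [hpascal, Nat.cast_add, ih (by omega)] at hdvd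
    linear_combination hdvd

theorem choose_prime_pow_sub_two_cast (hq : q.Prime) {n k : ℕ} (hn : n ≠ 0) (hk : k < q ^ n) :
    ((q ^ n - 2).choose k : ZMod q) = (-1) ^ k * (k + 1) := by
  induction k with
  | zero => simp
  | succ k ih =>
    have htwo : 2 ≤ q ^ n := hq.two_le.trans (Nat.le_self_pow hn q)
    have hpascal := Nat.choose_succ_succ' (q ^ n - 2) k
    rw [show q ^ n - 2 + 1 = q ^ n - 1 by omega] at hpascal
    have hprev := choose_prime_pow_sub_one_cast hq hk
    rw [hpascal, Nat.cast_add, ih (by omega)] at hprev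
    push_cast
    linear_combination hprev

/-- The residue of `C(qⁿ - 2, k)` modulo `q`, as a function of `k` modulo `2q`. -/
def altSucc (q : ℕ) (t : ZMod (2 * q)) : ZMod q := (-1) ^ t.val * (t.val + 1)

theorem altSucc_natCast (k : ℕ) : altSucc q k = (-1) ^ k * (k + 1) := by
  have hk := Nat.mod_add_div k (2 * q)
  rw [altSucc, ZMod.val_natCast]
  conv_rhs => rw [← hk]
  push_cast
  rw [pow_add, pow_mul, (even_two_mul q).neg_one_pow, one_pow, mul_one, ZMod.natCast_self]
  ring

theorem card_altSucc_eq [hq : Fact q.Prime] (p : ZMod q) : #{t | altSucc q t = p} = 2 := by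
  rcases hq.out.eq_two_or_odd' with rfl | hodd
  · fin_cases p <;> decide +revert
  · let e := ZMod.chineseRemainder (Nat.coprime_two_left.2 hodd)
    have he : ∀ t, e t = ((t.val : ZMod 2), (t.val : ZMod q)) := fun t => by
      conv_lhs => rw [← ZMod.natCast_zmod_val t]
      exact map_natCast e t.val
    have hsign : ∀ t : ZMod (2 * q), (-1 : ZMod q) ^ t.val = (-1) ^ (t.val : ZMod 2).val := by
      intro t
      rw [ZMod.val_natCast, ← neg_one_pow_eq_pow_mod_two]
    have hfiber : ∀ ε : ZMod 2, #{u : ZMod q | (-1) ^ ε.val * (u + 1) = p} = 1 := by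
      intro ε
      have hsq : ((-1 : ZMod q) ^ ε.val) * (-1) ^ ε.val = 1 := by
        rw [← mul_pow, neg_one_mul, neg_neg, one_pow]
      rw [card_eq_one]
      refine ⟨(-1) ^ ε.val * p - 1, ?_⟩
      ext u
      simp only [mem_filter, mem_univ, true_and, mem_singleton]
      constructor
      · intro h
        linear_combination (-1 : ZMod q) ^ ε.val * h - (u + 1) * hsq
      · rintro rfl
        linear_combination p * hsq
    calc #{t | altSucc q t = p}
        = #{z : ZMod 2 × ZMod q | (-1) ^ z.1.val * (z.2 + 1) = p} := by
          rw [← Fintype.card_subtype, ← Fintype.card_subtype]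
          exact Fintype.card_congr (e.toEquiv.subtypeEquiv fun t => by
            simp [altSucc, he, hsign])
      _ = ∑ ε : ZMod 2, #{u : ZMod q | (-1) ^ ε.val * (u + 1) = p} := by
          rw [card_filter, Fintype.sum_prod_type]
          simp only [card_filter]
      _ = 2 := by simp [hfiber]

end Binomial

section LazyWalk

open ZMod

variable {L : ℕ} [NeZero L]

theorem norm_one_sub_mul_add_mul_lt_one {a : ℝ} (ha0 : 0 < a) (ha1 : a < 1) {z : ℂ}
    (hz : ‖z‖ = 1) (hz1 : z ≠ 1) : ‖(1 - a : ℂ) + a * z‖ < 1 := by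
  have := norm_combo_lt_of_ne (x := (1 : ℂ)) (y := z) (r := 1) (by simp) hz.le hz1.symm
    (sub_pos.2 ha1) ha0 (by ring)
  simpa [Complex.real_smul] using this

theorem tendsto_pow_one_sub_add_mul_stdAddChar {a : ℝ} (ha0 : 0 < a) (ha1 : a < 1)
    (k : ZMod L) :
    Tendsto (fun j => ((1 - a : ℂ) + a * stdAddChar (-k)) ^ j) atTop
      (nhds (if k = 0 then 1 else 0)) := by
  split_ifs with hk
  · simp [hk]
  · apply tendsto_pow_atTop_nhds_zero_of_norm_lt_one
    refine norm_one_sub_mul_add_mul_lt_one ha0 ha1 ?_ ?_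
    · rw [stdAddChar_apply]
      exact Circle.norm_coe _
    · rw [← AddChar.map_zero_eq_one (stdAddChar (N := L))]
      exact injective_stdAddChar.ne (neg_ne_zero.2 hk)

theorem dft_eq_pow_mul_of_lazyWalk_step {a : ℂ} {Φ : ℕ → ZMod L → ℂ}
    (hΦ : ∀ j t, Φ (j + 1) t = (1 - a) * Φ j t + a * Φ j (t - 1)) (j : ℕ) (k : ZMod L) :
    𝓕 (Φ j) k = ((1 - a) + a * stdAddChar (-k)) ^ j * 𝓕 (Φ 0) k := by
  induction j with
  | zero => simp
  | succ j ih =>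
    have hshift : ∑ s : ZMod L, stdAddChar (-(s * k)) • Φ j (s - 1)
        = stdAddChar (-k) * 𝓕 (Φ j) k := by
      rw [dft_apply, mul_sum]
      refine Fintype.sum_equiv (Equiv.subRight 1) _ _ fun s => ?_
      simp only [Equiv.subRight_apply, smul_eq_mul, ← mul_assoc, ← AddChar.map_add_eq_mul]
      ring_nf
    have hsplit : 𝓕 (Φ (j + 1)) k
        = (1 - a) * 𝓕 (Φ j) k + a * ∑ s : ZMod L, stdAddChar (-(s * k)) • Φ j (s - 1) := by
      simp only [dft_apply, hΦ, smul_eq_mul, mul_sum, ← sum_add_distrib]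
      exact sum_congr rfl fun s _ => by ring
    rw [hsplit, hshift, ih, pow_succ]
    ring

theorem tendsto_mean_of_lazyWalk_step {a : ℝ} (ha0 : 0 < a) (ha1 : a < 1)
    {Q : ℕ → ZMod L → ℝ} (hQ : ∀ j t, Q (j + 1) t = (1 - a) * Q j t + a * Q j (t - 1))
    (t : ZMod L) :
    Tendsto (fun j => Q j t) atTop (nhds ((∑ e, Q 0 e) / L)) := by
  let Φ : ℕ → ZMod L → ℂ := fun j e => Q j e
  have hΦ : ∀ j e, Φ (j + 1) e = (1 - a) * Φ j e + a * Φ j (e - 1) := fun j e => by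
    simp only [Φ, hQ]
    push_cast
    rfl
  have hinv : ∀ j, Φ j t = (L : ℂ)⁻¹ * ∑ k, stdAddChar (k * t) *
      (((1 - a) + a * stdAddChar (-k)) ^ j * 𝓕 (Φ 0) k) := fun j => by
    conv_lhs => rw [← LinearEquiv.symm_apply_apply 𝓕 (Φ j)]
    simp only [invDFT_apply, dft_eq_pow_mul_of_lazyWalk_step hΦ j, smul_eq_mul]
  have hC : Tendsto (fun j => Φ j t) atTop (nhds ((L : ℂ)⁻¹ * ∑ e, Φ 0 e)) := by
    simp_rw [hinv]
    rw [← dft_apply_zero]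
    convert (tendsto_finsetSum univ fun k _ =>
      ((tendsto_pow_one_sub_add_mul_stdAddChar ha0 ha1 k).mul_const (𝓕 (Φ 0) k)).const_mul
        (stdAddChar (k * t))).const_mul (L : ℂ)⁻¹
    simp
  convert (Complex.continuous_re.tendsto _).comp hC using 2 with j
  · simp [Φ]
  · simp only [Φ, ← Complex.ofReal_sum, ← Complex.ofReal_natCast, ← Complex.ofReal_inv,
      ← Complex.ofReal_mul, Complex.ofReal_re]
    ring

end LazyWalk

theorem kpath_succ (x : ℕ → Bool) (N : ℕ) :
    kpath x (N + 1) = kpath x N + if x N = true then 1 else 0 := by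
  unfold kpath
  rw [range_add_one, filter_insert]
  split_ifs
  · exact card_insert_of_notMem fun h => by simp at h
  · rfl

theorem dependsOn_kpath (N : ℕ) : DependsOn (kpath · N) (Set.Iio N) := fun x y h => by
  simp only [kpath]
  rw [filter_congr fun i hi => by rw [h i (mem_range.1 hi)]]

theorem DependsOn.inter_kpath {B : Set (ℕ → Bool)} {M N : ℕ}
    (hB : DependsOn (· ∈ B) (Set.Iio M)) (hMN : M ≤ N) (P : ℕ → Prop) :
    DependsOn (· ∈ B ∩ {x | P (kpath x N)}) (Set.Iio N) := fun x y h => by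
  have hB' := hB fun i hi => h i (lt_of_lt_of_le hi hMN)
  have hk : kpath x N = kpath y N := dependsOn_kpath N h
  simp only [Set.mem_inter_iff, Set.mem_ofPred_eq] at hB' ⊢
  rw [hB', hk]

theorem kpath_le (x : ℕ → Bool) (N : ℕ) : kpath x N ≤ N :=
  (card_filter_le _ _).trans (card_range N).le

section Cylinder

def cyl (N : ℕ) (y : ℕ → Bool) : Set (ℕ → Bool) := {x | ∀ i ∈ range N, x i = y i}

variable {N : ℕ} {B : Set (ℕ → Bool)}

theorem measurableSet_cyl (N : ℕ) (y : ℕ → Bool) : MeasurableSet (cyl N y) := by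
  simp only [cyl, Set.ofPred_forall]
  exact .biInter (Set.to_countable _) fun i _ =>
    measurableSet_eq_fun (measurable_pi_apply i) measurable_const

theorem exists_eq_biUnion_cyl_of_dependsOn (hB : DependsOn (· ∈ B) (Set.Iio N)) :
    ∃ T ⊆ (range N).powerset, B = ⋃ s ∈ T, cyl N (fun i => decide (i ∈ s)) := by
  classical
  refine ⟨{s ∈ (range N).powerset | (fun i => decide (i ∈ s)) ∈ B}, filter_subset _ _, ?_⟩
  ext x
  simp only [Set.mem_iUnion, mem_filter, mem_powerset, cyl, Set.mem_ofPred_eq, exists_prop]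
  constructor
  · intro hx
    have hagree : ∀ i ∈ range N, x i = decide (i ∈ {i ∈ range N | x i = true}) := by
      intro i hi
      cases h : x i <;> simp [hi, h]
    refine ⟨{i ∈ range N | x i = true}, ⟨filter_subset _ _, ?_⟩, hagree⟩
    exact cast (hB fun i hi => hagree i (mem_range.2 hi)) hx
  · rintro ⟨s, ⟨-, hs⟩, hxs⟩
    exact cast (hB fun i hi => hxs i (mem_range.2 hi)).symm hs

theorem pairwiseDisjoint_cyl (N : ℕ) :
    ((range N).powerset : Set (Finset ℕ)).PairwiseDisjoint
      (fun s => cyl N (fun i => decide (i ∈ s))) := by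
  intro s hs t ht hst
  refine Set.disjoint_left.2 fun x hxs hxt => hst ?_
  ext i
  by_cases hi : i ∈ range N
  · simpa using (hxs i hi).symm.trans (hxt i hi)
  · exact iff_of_false (fun h => hi (mem_powerset.1 hs h)) (fun h => hi (mem_powerset.1 ht h))

theorem measurableSet_of_dependsOn (hB : DependsOn (· ∈ B) (Set.Iio N)) : MeasurableSet B := by
  obtain ⟨T, -, rfl⟩ := exists_eq_biUnion_cyl_of_dependsOn hB
  exact .biUnion (Set.to_countable _) fun s _ => measurableSet_cyl N _

end Cylinder

namespace IsBernoulli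

variable {α : ℝ} {μ : Measure (ℕ → Bool)} {N : ℕ} {B : Set (ℕ → Bool)}

theorem measure_cyl_inter_eval (hμ : IsBernoulli α μ) (N : ℕ) (y : ℕ → Bool) (c : Bool) :
    μ (cyl N y ∩ {x | x N = c}) =
      μ (cyl N y) * (if c = true then ENNReal.ofReal α else ENNReal.ofReal (1 - α)) := by
  have hcyl : cyl N y ∩ {x | x N = c} = cyl (N + 1) (Function.update y N c) := by
    ext x
    simp only [cyl, Set.mem_inter_iff, Set.mem_ofPred_eq, mem_range, Nat.lt_succ_iff_lt_or_eq]
    constructor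
    · rintro ⟨hlt, rfl⟩ i (hi | rfl)
      · rw [Function.update_of_ne hi.ne, hlt i hi]
      · rw [Function.update_self]
    · intro h
      refine ⟨fun i hi => ?_, by simpa using h N (.inr rfl)⟩
      rw [h i (.inl hi), Function.update_of_ne hi.ne]
  rw [hcyl, cyl, cyl, hμ.2, hμ.2, prod_range_succ, Function.update_self]
  congr 1
  exact prod_congr rfl fun i hi => by rw [Function.update_of_ne (mem_range.1 hi).ne]

theorem measure_inter_eval (hμ : IsBernoulli α μ) (hB : DependsOn (· ∈ B) (Set.Iio N))
    (c : Bool) :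
    μ (B ∩ {x | x N = c}) =
      μ B * (if c = true then ENNReal.ofReal α else ENNReal.ofReal (1 - α)) := by
  obtain ⟨T, hT, rfl⟩ := exists_eq_biUnion_cyl_of_dependsOn hB
  have hdisj := (pairwiseDisjoint_cyl N).subset (coe_subset.2 hT)
  rw [Set.iUnion₂_inter, measure_biUnion_finset (hdisj.mono fun s => Set.inter_subset_left),
    measure_biUnion_finset hdisj fun s _ => measurableSet_cyl N _, sum_mul]
  · simp only [hμ.measure_cyl_inter_eval]
  · exact fun s _ => (measurableSet_cyl N _).inter
      (measurableSet_eq_fun (measurable_pi_apply N) measurable_const)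

theorem measureReal_inter_eval (hμ : IsBernoulli α μ) (hα0 : 0 ≤ α) (hα1 : α ≤ 1)
    (hB : DependsOn (· ∈ B) (Set.Iio N)) (c : Bool) :
    μ.real (B ∩ {x | x N = c}) = μ.real B * if c = true then α else 1 - α := by
  rw [measureReal_def, hμ.measure_inter_eval hB, ENNReal.toReal_mul, ← measureReal_def]
  cases c <;> simp [hα0, hα1]

theorem measureReal_inter_kpath_succ (hμ : IsBernoulli α μ) (hα0 : 0 ≤ α) (hα1 : α ≤ 1)
    {L : ℕ} (hB : DependsOn (· ∈ B) (Set.Iio N)) (t : ZMod L) :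
    μ.real (B ∩ {x | (kpath x (N + 1) : ZMod L) = t}) =
      (1 - α) * μ.real (B ∩ {x | (kpath x N : ZMod L) = t}) +
        α * μ.real (B ∩ {x | (kpath x N : ZMod L) = t - 1}) := by
  have hsplit : B ∩ {x | (kpath x (N + 1) : ZMod L) = t} =
      (B ∩ {x | (kpath x N : ZMod L) = t}) ∩ {x | x N = false} ∪
        (B ∩ {x | (kpath x N : ZMod L) = t - 1}) ∩ {x | x N = true} := by
    ext x
    simp only [Set.mem_inter_iff, Set.mem_union, Set.mem_ofPred_eq, kpath_succ]
    cases x N <;> simp [eq_sub_iff_add_eq]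
  have := hμ.1
  have hdep := fun s : ZMod L => hB.inter_kpath le_rfl fun k => (k : ZMod L) = s
  rw [hsplit, measureReal_union, hμ.measureReal_inter_eval hα0 hα1 (hdep t),
    hμ.measureReal_inter_eval hα0 hα1 (hdep (t - 1))]
  · simp only [Bool.false_eq_true, if_false, if_true]
    ring
  · exact Set.disjoint_left.2 fun x hx hx' => by simp_all
  · exact (measurableSet_of_dependsOn (hdep _)).inter
      (measurableSet_eq_fun (measurable_pi_apply N) measurable_const)

theorem measureReal_inter_kpath_mem (hμ : IsBernoulli α μ) {L M N : ℕ}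
    (hB : DependsOn (· ∈ B) (Set.Iio M)) (hMN : M ≤ N) (S : Finset (ZMod L)) :
    μ.real (B ∩ {x | (kpath x N : ZMod L) ∈ S}) =
      ∑ t ∈ S, μ.real (B ∩ {x | (kpath x N : ZMod L) = t}) := by
  have := hμ.1
  have hunion : B ∩ {x | (kpath x N : ZMod L) ∈ S} =
      ⋃ t ∈ S, B ∩ {x | (kpath x N : ZMod L) = t} := by
    ext x
    simp
  rw [hunion, measureReal_biUnion_finset]
  · exact fun s _ t _ hst => Set.disjoint_left.2 fun x hs ht => hst (hs.2.symm.trans ht.2)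
  · exact fun t _ => measurableSet_of_dependsOn (hB.inter_kpath hMN fun k => (k : ZMod L) = t)

theorem tendsto_measureReal_inter_kpath_mem (hμ : IsBernoulli α μ) (hα0 : 0 < α) (hα1 : α < 1)
    {L M : ℕ} [NeZero L] (hB : DependsOn (· ∈ B) (Set.Iio M)) (S : Finset (ZMod L)) :
    Tendsto (fun N => μ.real (B ∩ {x | (kpath x N : ZMod L) ∈ S})) atTop
      (nhds (#S / L * μ.real B)) := by
  let Q : ℕ → ZMod L → ℝ := fun j t => μ.real (B ∩ {x | (kpath x (j + M) : ZMod L) = t})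
  have hQ : ∀ j t, Q (j + 1) t = (1 - α) * Q j t + α * Q j (t - 1) := fun j t => by
    simp only [Q, add_right_comm j 1 M]
    exact hμ.measureReal_inter_kpath_succ hα0.le hα1.le
      (hB.mono (Set.Iio_subset_Iio (Nat.le_add_left M j))) t
  have hQ0 : ∑ t, Q 0 t = μ.real B := by
    simp only [Q, zero_add, ← hμ.measureReal_inter_kpath_mem hB le_rfl, mem_univ,
      Set.ofPred_true, Set.inter_univ]
  have hlim := tendsto_finsetSum S fun t _ => tendsto_mean_of_lazyWalk_step hα0 hα1 hQ t
  rw [hQ0, sum_const, nsmul_eq_mul, mul_div_assoc', mul_div_right_comm] at hlim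
  rw [← tendsto_add_atTop_iff_nat M]
  refine hlim.congr fun j => ?_
  exact (hμ.measureReal_inter_kpath_mem hB (Nat.le_add_left M j) S).symm

end IsBernoulli

theorem F_eq_setOf_altSucc {q : ℕ} [hq : Fact q.Prime] {n : ℕ} (hn : n ≠ 0) (p : ℕ) :
    F q n p =
      {x | (kpath x (q ^ n - 2) : ZMod (2 * q)) ∈ ({t | altSucc q t = p} : Finset _)} := by
  ext x
  have hk : kpath x (q ^ n - 2) < q ^ n :=
    (kpath_le x _).trans_lt (Nat.sub_lt (pow_pos hq.out.pos n) two_pos)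
  simp only [F, dpath, Set.mem_ofPred_eq, mem_filter, mem_univ, true_and, altSucc_natCast,
    choose_prime_pow_sub_two_cast hq.out hn hk]

theorem dependsOn_F (q m r : ℕ) : DependsOn (· ∈ F q m r) (Set.Iio (q ^ m - 2)) :=
  fun x y h => by
    have hk : kpath x (q ^ m - 2) = kpath y (q ^ m - 2) := dependsOn_kpath _ h
    simp only [F, dpath, Set.mem_ofPred_eq, hk]

theorem stmt11_general (q : ℕ) (hq : q.Prime) (α : ℝ) (hα0 : 0 < α) (hα1 : α < 1)
    (μ : Measure (ℕ → Bool)) (hμ : IsBernoulli α μ)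
    (m : ℕ) (p r : ℕ) :
    Tendsto (fun n : ℕ => μ (F q n p ∩ F q m r)) atTop
      (nhds ((q : ENNReal)⁻¹ * μ (F q m r))) := by
  have := Fact.mk hq
  have := hμ.1
  have hlevel : Tendsto (fun n => q ^ n - 2) atTop atTop :=
    (tendsto_sub_atTop_nat 2).comp (tendsto_pow_atTop_atTop_of_one_lt hq.one_lt)
  have hreal := (hμ.tendsto_measureReal_inter_kpath_mem hα0 hα1 (dependsOn_F q m r)
    {t | altSucc q t = p}).comp hlevel
  rw [card_altSucc_eq] at hreal
  have hsets : ∀ᶠ n in atTop, ENNReal.ofReal (μ.real (F q m r ∩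
      {x | (kpath x (q ^ n - 2) : ZMod (2 * q)) ∈ ({t | altSucc q t = p} : Finset _)})) =
      μ (F q n p ∩ F q m r) :=
    (eventually_ne_atTop 0).mono fun n hn => by
      rw [ofReal_measureReal, F_eq_setOf_altSucc hn, Set.inter_comm]
  have hlimit : ENNReal.ofReal ((2 : ℕ) / (2 * q : ℕ) * μ.real (F q m r)) =
      (q : ENNReal)⁻¹ * μ (F q m r) := by
    have hq0 : (0 : ℝ) < q := by exact_mod_cast hq.pos
    have hfrac : ((2 : ℕ) : ℝ) / ((2 * q : ℕ) : ℝ) = (q : ℝ)⁻¹ := by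
      push_cast
      field_simp
    rw [hfrac, ENNReal.ofReal_mul (inv_nonneg.2 hq0.le), ENNReal.ofReal_inv_of_pos hq0,
      ENNReal.ofReal_natCast, ofReal_measureReal]
  rw [← hlimit]
  exact (ENNReal.tendsto_ofReal hreal).congr' hsets

theorem stmt11 (q : ℕ) (hq : q.Prime) (α : ℝ) (hα0 : 0 < α) (hα1 : α < 1)
    (μ : Measure (ℕ → Bool)) (hμ : IsBernoulli α μ)
    (m : ℕ) (hm : 1 ≤ m) (p r : ℕ) (hp : p ≤ q - 1) (hr : r ≤ q - 1) :
    Tendsto (fun n : ℕ => μ (F q n p ∩ F q m r)) atTop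
      (nhds ((q : ENNReal)⁻¹ * μ (F q m r))) :=
  stmt11_general q hq α hα0 hα1 μ hμ m p r
end

section
/- Let q be a prime, 0 ≤ p < q, and 0 < α < 1. Let Fₙ(q,p) = {x ∈ {0,1}^ℕ : d_{qⁿ−2}(x) ≡ p (mod q)} for n ≥ 1. Then μ_α(⋃_{n=1}^∞ Fₙ(q,p)) = 1; that is, almost every path x passes, for some n, through a vertex at level qⁿ − 2 whose binomial coefficient is congruent to p modulo q. -/
open MeasureTheory Filter

/-! Since `q` divides `C(qⁿ, k)` for `0 < k < qⁿ`, Pascal's rule gives `C(qⁿ - 1, k) ≡ (-1)ᵏ` and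
then `C(qⁿ - 2, k) ≡ (-1)ᵏ (k + 1) (mod q)`. So `x ∈ Fₙ(q,p)` depends only on `k_{qⁿ-2}(x) mod 2q`,
and every residue class mod `2q` is reached from any count within `2q` steps. Whatever the path did
before level `qⁿ⁺¹ - 2 - 2q`, with probability at least `min(α, 1 - α)^{2q}` its last `2q` steps
before level `qⁿ⁺¹ - 2` bring the count into a good class, so the probability of missing all of
`F₂, …, F_m` decays geometrically. -/

open Finset Function
open scoped ENNReal

namespace ZMod

variable {q : ℕ} [Fact q.Prime]

theorem natCast_choose_prime_pow_sub_one (n : ℕ) {k : ℕ} (hk : k < q ^ n) :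
    (((q ^ n - 1).choose k : ℕ) : ZMod q) = (-1) ^ k := by
  induction k with
  | zero => simp
  | succ k ih =>
    have hdvd : (((q ^ n).choose (k + 1) : ℕ) : ZMod q) = 0 :=
      (natCast_eq_zero_iff _ _).2 (Nat.Prime.dvd_choose_pow Fact.out k.succ_ne_zero hk.ne)
    rw [← Nat.sub_add_cancel (by omega : 1 ≤ q ^ n), Nat.choose_succ_succ] at hdvd
    push_cast at hdvd
    rw [ih (by omega)] at hdvd
    linear_combination hdvd

theorem natCast_choose_prime_pow_sub_two (n : ℕ) {k : ℕ} (hk : k < q ^ n) :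
    (((q ^ n - 2).choose k : ℕ) : ZMod q) = (-1) ^ k * (k + 1) := by
  induction k with
  | zero => simp
  | succ k ih =>
    have hpascal : (((q ^ n - 2 + 1).choose (k + 1) : ℕ) : ZMod q) =
        (((q ^ n - 2).choose k + (q ^ n - 2).choose (k + 1) : ℕ) : ZMod q) := by
      rw [Nat.choose_succ_succ]
    rw [show q ^ n - 2 + 1 = q ^ n - 1 by omega, natCast_choose_prime_pow_sub_one n hk] at hpascal
    push_cast at hpascal
    rw [ih (by omega)] at hpascal
    push_cast
    linear_combination -hpascal

end ZMod

def signedSucc (q k : ℕ) : ZMod q := (-1) ^ k * (k + 1)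

theorem signedSucc_periodic (q : ℕ) : Periodic (signedSucc q) (2 * q) := by
  intro k
  simp [signedSucc, pow_add, pow_mul]

theorem exists_signedSucc_eq {q : ℕ} [Fact q.Prime] (p : ℕ) : ∃ k, signedSucc q k = p := by
  have hq1 : ((q - 1 : ℕ) : ZMod q) = -1 := by
    rw [Nat.cast_sub (Fact.out : q.Prime).one_le, ZMod.natCast_self]; ring
  refine ⟨(q - 1) * (1 + (q - 1) * p), ?_⟩
  rw [signedSucc, pow_mul, ZMod.pow_card_sub_one_eq_one (neg_ne_zero.2 one_ne_zero)]
  simp only [Nat.cast_mul, Nat.cast_add, Nat.cast_one, hq1, one_pow]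
  ring

theorem Function.Periodic.exists_add_lt_eq {β : Type*} {f : ℕ → β} {c : ℕ} (hf : Periodic f c)
    (hc : 0 < c) (s k : ℕ) : ∃ j < c, f (s + j) = f k := by
  have : NeZero c := ⟨hc.ne'⟩
  refine ⟨((k : ZMod c) - s).val, ZMod.val_lt _, ?_⟩
  have hmod : (s + ((k : ZMod c) - s).val) % c = k % c := by
    rw [← ZMod.natCast_eq_natCast_iff']
    simp
  rw [← hf.map_mod_nat, hmod, hf.map_mod_nat]

theorem exists_signedSucc_add_eq {q : ℕ} [Fact q.Prime] (s p : ℕ) :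
    ∃ j < 2 * q, signedSucc q (s + j) = p := by
  obtain ⟨k, hk⟩ := exists_signedSucc_eq (q := q) p
  rw [← hk]
  exact (signedSucc_periodic q).exists_add_lt_eq (by have := (Fact.out : q.Prime).pos; omega) s k

theorem mem_F_iff {q : ℕ} [Fact q.Prime] {n p : ℕ} {x : ℕ → Bool} :
    x ∈ F q n p ↔ signedSucc q (kpath x (q ^ n - 2)) = p := by
  have hk : kpath x (q ^ n - 2) < q ^ n := (card_filter_le _ _).trans_lt <| by
    rw [card_range]; exact Nat.sub_lt (pow_pos (Fact.out : q.Prime).pos n) two_pos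
  show ((dpath _ x : ℕ) : ZMod q) = p ↔ _
  rw [dpath, ZMod.natCast_choose_prime_pow_sub_two n hk, signedSucc]

def onesBelow (x : ℕ → Bool) (n : ℕ) : Finset ℕ := (range n).filter (fun i => x i = true)

section onesBelow

variable {x y : ℕ → Bool} {n : ℕ} {T : Finset ℕ}

theorem kpath_eq_card_onesBelow : kpath x n = #(onesBelow x n) := rfl

theorem onesBelow_subset_range : onesBelow x n ⊆ range n := filter_subset _ _

theorem onesBelow_eq_iff (hT : T ⊆ range n) :
    onesBelow x n = T ↔ ∀ i ∈ range n, x i = decide (i ∈ T) := by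
  constructor
  · rintro rfl i hi
    simp [onesBelow, hi]
  · intro h
    ext i
    by_cases hi : i ∈ range n
    · simp [onesBelow, hi, h i hi]
    · simp only [onesBelow, mem_filter, hi, false_and, false_iff]
      exact fun hiT => hi (hT hiT)

theorem onesBelow_eq_onesBelow_iff :
    onesBelow x n = onesBelow y n ↔ ∀ i ∈ Set.Iio n, x i = y i := by
  rw [onesBelow_eq_iff onesBelow_subset_range]
  simp only [mem_range, Set.mem_Iio]
  refine forall₂_congr fun i hi => ?_
  simp [onesBelow, hi]

theorem onesBelow_eq_of_add_eq {L D : ℕ} {U : Finset ℕ} (hT : T ⊆ range L)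
    (hU : U ⊆ Ico L (L + D)) (h : onesBelow x (L + D) = T ∪ U) : onesBelow x L = T := by
  have hrestrict : onesBelow x L = (onesBelow x (L + D)).filter (· < L) := by
    ext i
    simp only [onesBelow, mem_filter, mem_range]
    grind
  rw [hrestrict, h, filter_union, filter_true_of_mem fun i hi => mem_range.1 (hT hi),
    filter_false_of_mem fun i hi => by simpa using (mem_Ico.1 (hU hi)).1, union_empty]

theorem dependsOn_kpath_s12 (n : ℕ) : DependsOn (fun x => kpath x n) (Set.Iio n) := fun x y h => by
  show kpath x n = kpath y n
  rw [kpath_eq_card_onesBelow, kpath_eq_card_onesBelow, onesBelow_eq_onesBelow_iff.2 h]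

theorem measurable_kpath (n : ℕ) : Measurable (fun x : ℕ → Bool => kpath x n) := by
  simp only [kpath, card_filter]
  exact Finset.measurable_sum _ fun i _ =>
    (Measurable.of_discrete (f := fun b : Bool => if b = true then 1 else 0)).comp
      (measurable_pi_apply i)

theorem measurableSet_onesBelow_eq (n : ℕ) (T : Finset ℕ) :
    MeasurableSet {x : ℕ → Bool | onesBelow x n = T} := by
  by_cases hT : T ⊆ range n
  · simp_rw [onesBelow_eq_iff hT]
    exact MeasurableSet.pi (range n).countable_toSet fun i _ => measurableSet_singleton _
  · convert MeasurableSet.empty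
    ext x
    simp only [Set.mem_ofPred_eq, Set.mem_empty_iff_false, iff_false]
    rintro rfl
    exact hT onesBelow_subset_range

end onesBelow

theorem card_union_Ico {T : Finset ℕ} {L : ℕ} (hT : T ⊆ range L) (j : ℕ) :
    #(T ∪ Ico L (L + j)) = #T + j := by
  rw [card_union_of_disjoint, Nat.card_Ico, Nat.add_sub_cancel_left]
  exact disjoint_left.2 fun i hi hi' => by
    have := mem_range.1 (hT hi)
    have := (mem_Ico.1 hi').1
    omega

section Bernoulli

variable {α : ℝ} {μ : Measure (ℕ → Bool)}

theorem measure_onesBelow_eq (hμ : IsBernoulli α μ) {n : ℕ} {T : Finset ℕ} (hT : T ⊆ range n) :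
    μ {x | onesBelow x n = T} = ENNReal.ofReal α ^ #T * ENNReal.ofReal (1 - α) ^ (n - #T) := by
  simp_rw [onesBelow_eq_iff hT]
  rw [hμ.2 (range n) (fun i => decide (i ∈ T)), prod_ite, prod_const, prod_const]
  simp only [decide_eq_true_eq]
  rw [filter_mem_eq_inter, inter_eq_right.2 hT, filter_not, filter_mem_eq_inter,
    inter_eq_right.2 hT, card_sdiff_of_subset hT, card_range]

theorem measure_onesBelow_eq_union_Ico (hμ : IsBernoulli α μ) {L D j : ℕ} {T : Finset ℕ}
    (hT : T ⊆ range L) (hj : j ≤ D) :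
    μ {x | onesBelow x (L + D) = T ∪ Ico L (L + j)} =
      μ {x | onesBelow x L = T} * (ENNReal.ofReal α ^ j * ENNReal.ofReal (1 - α) ^ (D - j)) := by
  have hsub : T ∪ Ico L (L + j) ⊆ range (L + D) :=
    union_subset (hT.trans (range_subset_range.2 (by omega))) fun i hi => by
      simp only [mem_Ico, mem_range] at hi ⊢
      omega
  have hcard : #T ≤ L := by simpa using card_le_card hT
  rw [measure_onesBelow_eq hμ hT, measure_onesBelow_eq hμ hsub, card_union_Ico hT,
    show L + D - (#T + j) = (L - #T) + (D - j) by omega, pow_add, pow_add]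
  ring

theorem min_pow_mul_le_measure_inter_kpath (hμ : IsBernoulli α μ) {A : Set (ℕ → Bool)}
    {L D N : ℕ} (hA : DependsOn (· ∈ A) (Set.Iio L)) (hN : L + D ≤ N) {P : ℕ → Prop}
    (hP : ∀ s, ∃ j ≤ D, P (s + j)) :
    min (ENNReal.ofReal α) (ENNReal.ofReal (1 - α)) ^ D * μ A ≤
      μ (A ∩ {x | P (kpath x N)}) := by
  classical
  set a := ENNReal.ofReal α
  set b := ENNReal.ofReal (1 - α)
  -- Each prefix class `T` of `A` contains the cylinder `C T` whose next `D` steps are `j #T`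
  -- ones followed by zeros; its conditional probability is at least `min a b ^ D`.
  obtain ⟨L, hL, rfl⟩ : ∃ L', L ≤ L' ∧ N = L' + D := ⟨N - D, by omega, by omega⟩
  replace hA := hA.mono (Set.Iio_subset_Iio hL)
  choose j hjD hjP using hP
  set S := (range L).powerset.filter (fun T => ∃ x ∈ A, onesBelow x L = T)
  have hS : ∀ T ∈ S, T ⊆ range L := fun T hT => mem_powerset.1 (mem_filter.1 hT).1
  let C : Finset ℕ → Set (ℕ → Bool) := fun T => {x | onesBelow x (L + D) = T ∪ Ico L (L + j #T)}
  have hC_restrict : ∀ T ∈ S, ∀ x ∈ C T, onesBelow x L = T := fun T hT x hx =>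
    onesBelow_eq_of_add_eq (hS T hT) (Ico_subset_Ico_right (by have := hjD #T; omega)) hx
  have hA_sub : A ⊆ ⋃ T ∈ S, {x | onesBelow x L = T} := fun x hx =>
    Set.mem_iUnion₂.2 ⟨_, mem_filter.2 ⟨mem_powerset.2 onesBelow_subset_range, x, hx, rfl⟩, rfl⟩
  have hC_sub : ∀ T ∈ S, C T ⊆ A ∩ {x | P (kpath x (L + D))} := by
    intro T hT x hx
    obtain ⟨y, hy, hyT⟩ := (mem_filter.1 hT).2
    have hxy := onesBelow_eq_onesBelow_iff.1 (hyT.trans (hC_restrict T hT x hx).symm)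
    refine ⟨(hA hxy).mp hy, ?_⟩
    show P #(onesBelow x (L + D))
    rw [show onesBelow x (L + D) = _ from hx, card_union_Ico (hS T hT)]
    exact hjP _
  have hC_disj : (S : Set (Finset ℕ)).PairwiseDisjoint C := fun T hT T' hT' hne =>
    Set.disjoint_left.2 fun x hx hx' =>
      hne ((hC_restrict T hT x hx).symm.trans (hC_restrict T' hT' x hx'))
  calc min a b ^ D * μ A ≤ min a b ^ D * ∑ T ∈ S, μ {x | onesBelow x L = T} := by
        gcongr
        exact (measure_mono hA_sub).trans (measure_biUnion_finset_le _ _)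
    _ = ∑ T ∈ S, μ {x | onesBelow x L = T} * min a b ^ D := by rw [mul_sum]; simp_rw [mul_comm]
    _ ≤ ∑ T ∈ S, μ (C T) := sum_le_sum fun T hT => by
        rw [measure_onesBelow_eq_union_Ico hμ (hS T hT) (hjD _)]
        gcongr
        calc min a b ^ D = min a b ^ j #T * min a b ^ (D - j #T) := by
              rw [← pow_add, Nat.add_sub_cancel' (hjD _)]
          _ ≤ a ^ j #T * b ^ (D - j #T) := by gcongr; exacts [min_le_left _ _, min_le_right _ _]
    _ = μ (⋃ T ∈ S, C T) :=
        (measure_biUnion_finset hC_disj fun T _ => measurableSet_onesBelow_eq _ _).symm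
    _ ≤ μ (A ∩ {x | P (kpath x (L + D))}) := measure_mono (Set.iUnion₂_subset hC_sub)

theorem measure_inter_not_kpath_le (hμ : IsBernoulli α μ) {A : Set (ℕ → Bool)} {L D N : ℕ}
    (hA : DependsOn (· ∈ A) (Set.Iio L)) (hN : L + D ≤ N) {P : ℕ → Prop}
    (hP : ∀ s, ∃ j ≤ D, P (s + j)) :
    μ (A ∩ {x | ¬ P (kpath x N)}) ≤
      (1 - min (ENNReal.ofReal α) (ENNReal.ofReal (1 - α)) ^ D) * μ A := by
  have := hμ.1
  have hlower := min_pow_mul_le_measure_inter_kpath hμ hA hN hP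
  have hsplit := measure_inter_add_sdiff (μ := μ) A
    (measurable_kpath N (MeasurableSet.of_discrete (s := {s | P s})))
  rw [ENNReal.sub_mul fun _ _ => measure_ne_top μ A, one_mul]
  refine ENNReal.le_sub_of_add_le_left (ne_top_of_le_ne_top (measure_ne_top μ _) hlower) ?_
  calc _ ≤ μ (A ∩ {x | P (kpath x N)}) + μ (A \ {x | P (kpath x N)}) := add_le_add hlower le_rfl
    _ = μ A := hsplit

theorem measure_exists_kpath_eq_one (hμ : IsBernoulli α μ) (hα0 : 0 < α) (hα1 : α < 1)
    {P : ℕ → Prop} {D : ℕ} (hP : ∀ s, ∃ j ≤ D, P (s + j)) {N : ℕ → ℕ}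
    (hN : ∀ m, N m + D ≤ N (m + 1)) :
    μ {x | ∃ m, P (kpath x (N m))} = 1 := by
  have := hμ.1
  set δ := min (ENNReal.ofReal α) (ENNReal.ofReal (1 - α)) ^ D
  have hδ : 0 < δ :=
    ENNReal.pow_pos (lt_min (ENNReal.ofReal_pos.2 hα0) (ENNReal.ofReal_pos.2 (by linarith))) D
  have hN_mono : Monotone N := monotone_nat_of_le_succ fun m => (Nat.le_add_right _ _).trans (hN m)
  -- Starting at level `N 1` makes `E m` depend only on the coordinates below `N m`.
  let E : ℕ → Set (ℕ → Bool) := fun m => {x | ∀ i < m, ¬ P (kpath x (N (i + 1)))}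
  have hE_dep : ∀ m, DependsOn (· ∈ E m) (Set.Iio (N m)) := fun m x y h =>
    propext <| forall₂_congr fun i hi => by
      rw [show kpath x (N (i + 1)) = kpath y (N (i + 1)) from
        dependsOn_kpath_s12 _ fun k hk => h k (lt_of_lt_of_le hk (hN_mono hi))]
  have hE : ∀ m, μ (E m) ≤ (1 - δ) ^ m := by
    intro m
    induction m with
    | zero => exact prob_le_one
    | succ m ih =>
      calc μ (E (m + 1)) ≤ μ (E m ∩ {x | ¬ P (kpath x (N (m + 1)))}) :=
            measure_mono fun x hx => ⟨fun i hi => hx i (by omega), hx m (by omega)⟩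
        _ ≤ (1 - δ) * μ (E m) := measure_inter_not_kpath_le hμ (hE_dep m) (hN m) hP
        _ ≤ (1 - δ) ^ (m + 1) := by rw [pow_succ']; gcongr
  have hcompl_sub : ∀ m, {x | ∃ m, P (kpath x (N m))}ᶜ ⊆ E m :=
    fun m x hx i _ hi => hx ⟨i + 1, hi⟩
  have hcompl : μ {x | ∃ m, P (kpath x (N m))}ᶜ = 0 :=
    le_antisymm (ge_of_tendsto' (ENNReal.tendsto_pow_atTop_nhds_zero_of_lt_one
      (ENNReal.sub_lt_self ENNReal.one_ne_top one_ne_zero hδ.ne')) fun m =>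
        (measure_mono (hcompl_sub m)).trans (hE m)) bot_le
  rw [← prob_compl_eq_zero_iff]
  · exact hcompl
  · simp only [Set.ofPred_exists]
    exact MeasurableSet.iUnion fun m => measurable_kpath _ MeasurableSet.of_discrete

end Bernoulli

theorem pow_sub_two_add_le {q : ℕ} (hq : 2 ≤ q) (m : ℕ) :
    q ^ (m + 2) - 2 + 2 * q ≤ q ^ (m + 3) - 2 := by
  have h1 : 2 * q ≤ q ^ (m + 2) :=
    calc 2 * q ≤ q ^ 2 := by rw [sq]; exact Nat.mul_le_mul_right q hq
      _ ≤ q ^ (m + 2) := Nat.pow_le_pow_right (by omega) (by omega)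
  have h2 : 2 * q ^ (m + 2) ≤ q ^ (m + 3) := by
    rw [pow_succ q (m + 2), mul_comm]; exact Nat.mul_le_mul_left _ hq
  omega

theorem stmt12_general (q : ℕ) (hq : q.Prime) (p : ℕ)
    (α : ℝ) (hα0 : 0 < α) (hα1 : α < 1)
    (μ : Measure (ℕ → Bool)) (hμ : IsBernoulli α μ) :
    μ (⋃ n : ℕ, ⋃ _ : 1 ≤ n, F q n p) = 1 := by
  have := Fact.mk hq
  have := hμ.1
  have hhit := measure_exists_kpath_eq_one hμ hα0 hα1 (P := fun s => signedSucc q s = p)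
    (N := fun m => q ^ (m + 2) - 2)
    (fun s => (exists_signedSucc_add_eq s p).imp fun j hj => ⟨hj.1.le, hj.2⟩)
    (pow_sub_two_add_le hq.two_le)
  refine le_antisymm prob_le_one (hhit ▸ measure_mono ?_)
  rintro x ⟨m, hm⟩
  exact Set.mem_iUnion₂.2 ⟨m + 2, by omega, mem_F_iff.2 hm⟩

theorem stmt12 (q : ℕ) (hq : q.Prime) (p : ℕ) (hp : p < q)
    (α : ℝ) (hα0 : 0 < α) (hα1 : α < 1)
    (μ : Measure (ℕ → Bool)) (hμ : IsBernoulli α μ) :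
    μ (⋃ n : ℕ, ⋃ _ : 1 ≤ n, F q n p) = 1 :=
  stmt12_general q hq p α hα0 hα1 μ hμ
end
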